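/- arXiv:1203.6555 — 6 statements merged into one kernel-verified Lean document; each statement's English description precedes it below -/
import Mathlib

section
/- Let a, b be real numbers and ξ > 0. Define the complex 3×3 matrices A = −[[0,0,0],[−a,1,0],[−b,0,1]], B = [[1,a,b],[0,0,0],[0,0,0]], and D = diag(1, 1, √ξ). Then A·D⁻¹ + i·B·D is invertible and −(A·D⁻¹ + i·B·D)⁻¹·(A·D⁻¹ − i·B·D) = (1/(1+a²+b²ξ))·[[1−a²−b²ξ, 2a, 2b√ξ],[2a, a²−1−b²ξ, 2ab√ξ],[2b√ξ, 2ab√ξ, b²ξ−1−a²]]. -/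
/-!
The scattering matrix is the reflection `S = 2 v vᵀ / (vᵀ v) - 1` through the line spanned by
`v = (1, a, b √ξ)`. Indeed, the first row of `A D⁻¹ ± i B D` is `± i v` and its other two rows
`(a, -1, 0)` and `(b, 0, -1/√ξ)` are orthogonal to `v`; since `S` fixes `v` and negates `v^⊥`,
`(A D⁻¹ + i B D) S = -(A D⁻¹ - i B D)`.
-/

open scoped Matrix
open Matrix

namespace Matrix

variable {K : Type*} [Field K] {n : Type*} [Fintype n] [DecidableEq n]

def lineReflection (v : n → K) : Matrix n n K :=
  (2 / (v ⬝ᵥ v)) • vecMulVec v v - 1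

theorem vecMul_lineReflection_self {v : n → K} (hv : v ⬝ᵥ v ≠ 0) :
    v ᵥ* lineReflection v = v := by
  rw [lineReflection, vecMul_sub, vecMul_smul, vecMul_vecMulVec, vecMul_one, smul_smul,
    div_mul_cancel₀ _ hv, two_smul, add_sub_cancel_right]

theorem vecMul_lineReflection_of_dotProduct_eq_zero {v w : n → K} (hw : w ⬝ᵥ v = 0) :
    w ᵥ* lineReflection v = -w := by
  rw [lineReflection, vecMul_sub, vecMul_smul, vecMul_vecMulVec, vecMul_one, hw, zero_smul,
    smul_zero, zero_sub]

end Matrix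

namespace ThreeLineFilter

variable {K : Type*} [Field K]

/-- `A D⁻¹ + z B D` for `D = diag(1, 1, s)`, so that `𝒮 = -(vertexMatrix a b s i)⁻¹ *
vertexMatrix a b s (-i)`. -/
def vertexMatrix (a b s z : K) : Matrix (Fin 3) (Fin 3) K :=
  !![z, z * a, z * (b * s); a, -1, 0; b, 0, -s⁻¹]

theorem inv_diagonal_one_one {s : K} (hs : s ≠ 0) :
    (diagonal ![1, 1, s])⁻¹ = diagonal ![1, 1, s⁻¹] := by
  refine inv_eq_right_inv ?_
  rw [diagonal_mul_diagonal, ← diagonal_one]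
  congr 1
  ext i
  fin_cases i <;> simp [hs]

theorem neg_mul_inv_diagonal_add_smul_mul_diagonal (a b s z : K) (hs : s ≠ 0) :
    -!![0, 0, 0; -a, 1, 0; -b, 0, 1] * (diagonal ![1, 1, s])⁻¹
        + z • (!![1, a, b; 0, 0, 0; 0, 0, 0] * diagonal ![1, 1, s]) =
      vertexMatrix a b s z := by
  rw [inv_diagonal_one_one hs]
  ext i j
  fin_cases i <;> fin_cases j <;> simp [vertexMatrix, vecMul_diagonal]

theorem det_vertexMatrix (a b s z : K) (hs : s ≠ 0) :
    (vertexMatrix a b s z).det = z * (1 + a ^ 2 + b ^ 2 * s ^ 2) / s := by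
  rw [vertexMatrix, det_fin_three]
  simp only [of_apply, cons_val', cons_val_zero, cons_val_one, cons_val, cons_val_fin_one]
  field_simp
  ring

theorem dotProduct_self_eq (a b s : K) :
    ![1, a, b * s] ⬝ᵥ ![1, a, b * s] = 1 + a ^ 2 + b ^ 2 * s ^ 2 := by
  simp [dotProduct, Fin.sum_univ_three, ← sq, mul_pow]

theorem vertexMatrix_mul_lineReflection (a b s z : K) (hs : s ≠ 0)
    (hc : 1 + a ^ 2 + b ^ 2 * s ^ 2 ≠ 0) :
    vertexMatrix a b s z * lineReflection ![1, a, b * s] = -vertexMatrix a b s (-z) := by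
  have hv : ![1, a, b * s] ⬝ᵥ ![1, a, b * s] ≠ 0 := by rwa [dotProduct_self_eq]
  funext i
  rw [mul_apply_eq_vecMul]
  fin_cases i
  · change ![z, z * a, z * (b * s)] ᵥ* _ = -![-z, -z * a, -z * (b * s)]
    have hrow : ![z, z * a, z * (b * s)] = z • ![1, a, b * s] := by simp
    rw [hrow, smul_vecMul, vecMul_lineReflection_self hv]
    simp
  · change ![a, -1, 0] ᵥ* _ = -![a, -1, 0]
    exact vecMul_lineReflection_of_dotProduct_eq_zero (by simp)
  · change ![b, 0, -s⁻¹] ᵥ* _ = -![b, 0, -s⁻¹]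
    refine vecMul_lineReflection_of_dotProduct_eq_zero ?_
    rw [dotProduct, Fin.sum_univ_three]
    simp only [cons_val_zero, cons_val_one, cons_val_two, head_cons, tail_cons]
    field_simp
    ring

theorem lineReflection_eq (a b s : K) (hc : 1 + a ^ 2 + b ^ 2 * s ^ 2 ≠ 0) :
    lineReflection ![1, a, b * s] = (1 + a ^ 2 + b ^ 2 * s ^ 2)⁻¹ •
      !![1 - a ^ 2 - b ^ 2 * s ^ 2, 2 * a, 2 * b * s;
         2 * a, a ^ 2 - 1 - b ^ 2 * s ^ 2, 2 * a * b * s;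
         2 * b * s, 2 * a * b * s, b ^ 2 * s ^ 2 - 1 - a ^ 2] := by
  rw [lineReflection, dotProduct_self_eq]
  ext i j
  fin_cases i <;> fin_cases j <;> simp [one_apply] <;> field_simp <;> ring

end ThreeLineFilter

open ThreeLineFilter

/-- For the three-line Fülöp–Tsutsui filter with real parameters `a, b`
and `D = diag(1,1,√ξ)` (`ξ > 0`), the matrix `A·D⁻¹ + i·B·D` is invertible and the
scattering matrix `−(A·D⁻¹ + i·B·D)⁻¹·(A·D⁻¹ − i·B·D)` equals the explicit matrix
`(1/(1+a²+b²ξ))·[[1−a²−b²ξ, 2a, 2b√ξ],[2a, a²−1−b²ξ, 2ab√ξ],[2b√ξ, 2ab√ξ, b²ξ−1−a²]]`. -/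
theorem three_line_filter_scattering_matrix
    (a b ξ : ℝ) (hξ : 0 < ξ) :
    let A : Matrix (Fin 3) (Fin 3) ℂ := -(!![0, 0, 0; -(a : ℂ), 1, 0; -(b : ℂ), 0, 1])
    let B : Matrix (Fin 3) (Fin 3) ℂ := !![1, (a : ℂ), (b : ℂ); 0, 0, 0; 0, 0, 0]
    let D : Matrix (Fin 3) (Fin 3) ℂ :=
      Matrix.diagonal ![1, 1, ((Real.sqrt ξ : ℝ) : ℂ)]
    IsUnit (A * D⁻¹ + Complex.I • (B * D)) ∧
    -((A * D⁻¹ + Complex.I • (B * D))⁻¹ * (A * D⁻¹ - Complex.I • (B * D))) =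
      (((1 + a ^ 2 + b ^ 2 * ξ : ℝ) : ℂ))⁻¹ •
        !![((1 - a ^ 2 - b ^ 2 * ξ : ℝ) : ℂ), ((2 * a : ℝ) : ℂ),
             ((2 * b * Real.sqrt ξ : ℝ) : ℂ);
           ((2 * a : ℝ) : ℂ), ((a ^ 2 - 1 - b ^ 2 * ξ : ℝ) : ℂ),
             ((2 * a * b * Real.sqrt ξ : ℝ) : ℂ);
           ((2 * b * Real.sqrt ξ : ℝ) : ℂ), ((2 * a * b * Real.sqrt ξ : ℝ) : ℂ),
             ((b ^ 2 * ξ - 1 - a ^ 2 : ℝ) : ℂ)] := by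
  intro A B D
  obtain ⟨s, hs, rfl⟩ : ∃ s : ℝ, 0 < s ∧ ξ = s ^ 2 :=
    ⟨√ξ, Real.sqrt_pos.2 hξ, (Real.sq_sqrt hξ.le).symm⟩
  have hs₀ : (s : ℂ) ≠ 0 := by exact_mod_cast hs.ne'
  have hc : (1 + a ^ 2 + b ^ 2 * s ^ 2 : ℂ) ≠ 0 := by
    exact_mod_cast (by positivity : (0 : ℝ) < 1 + a ^ 2 + b ^ 2 * s ^ 2).ne'
  simp only [A, B, D, Real.sqrt_sq hs.le]
  rw [sub_eq_add_neg (_ * _ : Matrix (Fin 3) (Fin 3) ℂ), ← neg_smul,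
    neg_mul_inv_diagonal_add_smul_mul_diagonal _ _ _ _ hs₀,
    neg_mul_inv_diagonal_add_smul_mul_diagonal _ _ _ _ hs₀]
  push_cast
  rw [← lineReflection_eq _ _ _ hc]
  have hdet : IsUnit (vertexMatrix (a : ℂ) b s Complex.I).det := by
    rw [det_vertexMatrix _ _ _ _ hs₀]
    exact (div_ne_zero (mul_ne_zero Complex.I_ne_zero hc) hs₀).isUnit
  refine ⟨(isUnit_iff_isUnit_det _).mpr hdet, ?_⟩
  rw [← neg_eq_iff_eq_neg.mpr (vertexMatrix_mul_lineReflection _ _ _ _ hs₀ hc), mul_neg,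
    neg_neg, nonsing_inv_mul_cancel_left _ _ hdet]
end

section
/- Let a > 0, b ≠ 0 be real numbers and U > 0. Define P : (0,∞) → ℝ by P(E) = 4a²/((1+a²)² + b⁴(U/E − 1)) for 0 < E ≤ U and P(E) = 4a²/(1 + a² + b²√(1−U/E))² for E > U. Then P is strictly increasing on (0,U) and strictly decreasing on (U,∞). -/
/-- The transmission probability `P` of the three-line filter
(`a > 0`, `b ≠ 0`, control potential `U > 0`) is strictly increasing on `(0,U)` and
strictly decreasing on `(U,∞)`. -/
theorem transmission_probability_monotone
    (a b U : ℝ) (ha : 0 < a) (hb : b ≠ 0) (hU : 0 < U)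
    (P : ℝ → ℝ)
    (hP : ∀ E : ℝ, 0 < E →
      P E = if E ≤ U then 4 * a ^ 2 / ((1 + a ^ 2) ^ 2 + b ^ 4 * (U / E - 1))
            else 4 * a ^ 2 / (1 + a ^ 2 + b ^ 2 * Real.sqrt (1 - U / E)) ^ 2) :
    StrictMonoOn P (Set.Ioo 0 U) ∧ StrictAntiOn P (Set.Ioi U) := by
  have h4a : 0 < 4 * a ^ 2 := by positivity
  have hb2 : 0 < b ^ 2 := by positivity
  have hb4 : 0 < b ^ 4 := by positivity
  constructor
  · rintro x ⟨hx0, hxU⟩ y ⟨hy0, hyU⟩ hxy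
    rw [hP x hx0, hP y hy0, if_pos hxU.le, if_pos hyU.le]
    have h1 : 1 < U / y := (one_lt_div hy0).2 hyU
    have h2 : U / y < U / x := div_lt_div_of_pos_left hU hx0 hxy
    have hDy : 0 < (1 + a ^ 2) ^ 2 + b ^ 4 * (U / y - 1) :=
      add_pos (by positivity) (mul_pos hb4 (by linarith))
    have hD : (1 + a ^ 2) ^ 2 + b ^ 4 * (U / y - 1)
        < (1 + a ^ 2) ^ 2 + b ^ 4 * (U / x - 1) := by nlinarith
    exact div_lt_div_of_pos_left h4a hDy hD
  · rintro x hx y hy hxy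
    simp only [Set.mem_Ioi] at hx hy
    have hx0 : 0 < x := hU.trans hx
    have hy0 : 0 < y := hU.trans hy
    rw [hP x hx0, hP y hy0, if_neg (not_le.2 hx), if_neg (not_le.2 hy)]
    have h2 : U / y < U / x := div_lt_div_of_pos_left hU hx0 hxy
    have hux : U / x < 1 := (div_lt_one hx0).2 hx
    have hnn : 0 ≤ 1 - U / x := by linarith
    have hs : Real.sqrt (1 - U / x) < Real.sqrt (1 - U / y) :=
      Real.sqrt_lt_sqrt hnn (by linarith)
    have hbase : (0:ℝ) < 1 + a ^ 2 + b ^ 2 * Real.sqrt (1 - U / x) := by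
      have := Real.sqrt_nonneg (1 - U / x); nlinarith
    have hblt : 1 + a ^ 2 + b ^ 2 * Real.sqrt (1 - U / x)
        < 1 + a ^ 2 + b ^ 2 * Real.sqrt (1 - U / y) := by nlinarith
    have hDx : 0 < (1 + a ^ 2 + b ^ 2 * Real.sqrt (1 - U / x)) ^ 2 := by positivity
    have hD : (1 + a ^ 2 + b ^ 2 * Real.sqrt (1 - U / x)) ^ 2
        < (1 + a ^ 2 + b ^ 2 * Real.sqrt (1 - U / y)) ^ 2 :=
      pow_lt_pow_left₀ hblt hbase.le (by norm_num)
    exact div_lt_div_of_pos_left h4a hDx hD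
end

section
/- Let U > 0 and let β > 0 satisfy β² > 3 − 2√2. Define P : (0,∞) → ℝ by P(E) = 1/(1 + β²(U/E − 1)) for 0 < E ≤ U and P(E) = 1/(1 + β√(1−U/E))² for E > U. Then the set {E > 0 : P(E) > 1/2} equals the open interval (U·β²/(β²+1), U·β²/(β²−3+2√2)), whose length (the bandwidth) is W = 2(2−√2)·β²·U / ((β²−3+2√2)(β²+1)). -/
set_option maxHeartbeats 1000000


/-- For the three-line filter with `a = 1`, `β = b²/2 > 0` satisfying
`β² > 3 − 2√2`, the set of energies with transmission probability above `1/2` is exactly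
the open interval `(U·β²/(β²+1), U·β²/(β²−3+2√2))`, whose length (the bandwidth) equals
`W = 2(2−√2)·β²·U/((β²−3+2√2)(β²+1))`. -/
theorem filter_bandwidth
    (U β : ℝ) (hU : 0 < U) (hβ : 0 < β) (hβ2 : 3 - 2 * Real.sqrt 2 < β ^ 2)
    (P : ℝ → ℝ)
    (hP : ∀ E : ℝ, 0 < E →
      P E = if E ≤ U then 1 / (1 + β ^ 2 * (U / E - 1))
            else 1 / (1 + β * Real.sqrt (1 - U / E)) ^ 2) :
    {E : ℝ | 0 < E ∧ 1 / 2 < P E} =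
      Set.Ioo (U * β ^ 2 / (β ^ 2 + 1)) (U * β ^ 2 / (β ^ 2 - 3 + 2 * Real.sqrt 2)) ∧
    U * β ^ 2 / (β ^ 2 - 3 + 2 * Real.sqrt 2) - U * β ^ 2 / (β ^ 2 + 1) =
      2 * (2 - Real.sqrt 2) * β ^ 2 * U /
        ((β ^ 2 - 3 + 2 * Real.sqrt 2) * (β ^ 2 + 1)) := by
  have h2 : Real.sqrt 2 ^ 2 = 2 := Real.sq_sqrt (by norm_num)
  have h2pos : 0 < Real.sqrt 2 := Real.sqrt_pos.mpr (by norm_num)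
  have h2lt : Real.sqrt 2 < 3 / 2 := by nlinarith
  have h2gt1 : 1 < Real.sqrt 2 := by nlinarith
  have hD : 0 < β ^ 2 - 3 + 2 * Real.sqrt 2 := by linarith
  have hβ1 : (0:ℝ) < β ^ 2 + 1 := by positivity
  constructor
  · ext E
    simp only [Set.mem_setOf_eq, Set.mem_Ioo]
    constructor
    · rintro ⟨hE, hPE⟩
      rw [hP E hE] at hPE
      by_cases hEU : E ≤ U
      · rw [if_pos hEU] at hPE
        have hUE1 : 1 ≤ U / E := (one_le_div hE).mpr hEU
        have hden : 0 < 1 + β ^ 2 * (U / E - 1) := by nlinarith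
        have hlt2 : 1 + β ^ 2 * (U / E - 1) < 2 := by
          by_contra h
          push_neg at h
          have : 1 / (1 + β ^ 2 * (U / E - 1)) ≤ 1 / 2 :=
            one_div_le_one_div_of_le (by norm_num) h
          linarith
        have hkey : β ^ 2 * (U / E - 1) = β ^ 2 * (U - E) / E := by field_simp
        have h3 : β ^ 2 * (U - E) / E < 1 := by linarith [hkey ▸ hlt2]
        have h4 : β ^ 2 * (U - E) < E := (div_lt_one hE).mp h3
        constructor
        · rw [div_lt_iff₀ hβ1]; nlinarith
        · calc E ≤ U := hEU
            _ < U * β ^ 2 / (β ^ 2 - 3 + 2 * Real.sqrt 2) := by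
              rw [lt_div_iff₀ hD]; nlinarith
      · push_neg at hEU
        rw [if_neg (not_le.mpr hEU)] at hPE
        set s := Real.sqrt (1 - U / E) with hs
        have hUE1 : U / E < 1 := (div_lt_one hE).mpr hEU
        have hs0 : 0 ≤ s := Real.sqrt_nonneg _
        have hsq : s ^ 2 = 1 - U / E := Real.sq_sqrt (by linarith)
        have hden : (0:ℝ) < (1 + β * s) ^ 2 := by positivity
        have hlt2 : (1 + β * s) ^ 2 < 2 := by
          by_contra h
          push_neg at h
          have : 1 / (1 + β * s) ^ 2 ≤ 1 / 2 :=
            one_div_le_one_div_of_le (by norm_num) h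
          linarith
        have hlt : 1 + β * s < Real.sqrt 2 := by nlinarith [mul_nonneg hβ.le hs0]
        have hbs : β * s < Real.sqrt 2 - 1 := by linarith
        have hsq2 : β ^ 2 * (1 - U / E) < 3 - 2 * Real.sqrt 2 := by
          nlinarith [mul_nonneg hβ.le hs0]
        have hkey : β ^ 2 * (1 - U / E) = β ^ 2 * (E - U) / E := by field_simp
        have h4 : β ^ 2 * (E - U) < (3 - 2 * Real.sqrt 2) * E := by
          rw [hkey] at hsq2
          have := (div_lt_iff₀ hE).mp hsq2
          linarith
        constructor
        · calc U * β ^ 2 / (β ^ 2 + 1) < U := by rw [div_lt_iff₀ hβ1]; nlinarith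
            _ < E := hEU
        · rw [lt_div_iff₀ hD]; nlinarith
    · rintro ⟨h1, h2'⟩
      have hL0 : 0 < U * β ^ 2 / (β ^ 2 + 1) := by positivity
      have hE : 0 < E := lt_trans hL0 h1
      refine ⟨hE, ?_⟩
      rw [hP E hE]
      by_cases hEU : E ≤ U
      · rw [if_pos hEU]
        have hUE1 : 1 ≤ U / E := (one_le_div hE).mpr hEU
        have hden : 0 < 1 + β ^ 2 * (U / E - 1) := by nlinarith
        have h3 : U * β ^ 2 < E * (β ^ 2 + 1) := (div_lt_iff₀ hβ1).mp h1
        have h4 : β ^ 2 * (U - E) < E := by nlinarith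
        have hkey : β ^ 2 * (U / E - 1) = β ^ 2 * (U - E) / E := by field_simp
        have h5 : β ^ 2 * (U / E - 1) < 1 := by
          rw [hkey]; exact (div_lt_one hE).mpr h4
        rw [div_lt_div_iff₀ (by norm_num : (0:ℝ) < 2) hden]
        linarith
      · push_neg at hEU
        rw [if_neg (not_le.mpr hEU)]
        set s := Real.sqrt (1 - U / E) with hs
        have hUE1 : U / E < 1 := (div_lt_one hE).mpr hEU
        have hs0 : 0 ≤ s := Real.sqrt_nonneg _
        have hsq : s ^ 2 = 1 - U / E := Real.sq_sqrt (by linarith)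
        have hden : (0:ℝ) < (1 + β * s) ^ 2 := by positivity
        have h3 : E * (β ^ 2 - 3 + 2 * Real.sqrt 2) < U * β ^ 2 :=
          (lt_div_iff₀ hD).mp h2'
        have h4 : β ^ 2 * (E - U) < (3 - 2 * Real.sqrt 2) * E := by nlinarith
        have hkey : β ^ 2 * (1 - U / E) = β ^ 2 * (E - U) / E := by field_simp
        have h5 : β ^ 2 * (1 - U / E) < 3 - 2 * Real.sqrt 2 := by
          rw [hkey]
          rw [div_lt_iff₀ hE]
          linarith
        have hbs : β * s < Real.sqrt 2 - 1 := by
          by_contra h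
          push_neg at h
          nlinarith [mul_nonneg hβ.le hs0]
        have hlt2 : (1 + β * s) ^ 2 < 2 := by
          nlinarith [mul_nonneg hβ.le hs0]
        rw [div_lt_div_iff₀ (by norm_num : (0:ℝ) < 2) hden]
        linarith
  · field_simp
    ring
end

section
/- Let a, b, c, d be real numbers satisfying ac + bd = 0 and 1 + b² + d² = a² + c² + (ad−bc)². Then for every real t > 0, the complex number S(t) := −2(ac·(it) + bd) / (1 + (a²+c²)·(it) + (b²+d²) + (ad−bc)²·(it)) is well defined (the denominator is nonzero) and satisfies |S(t)|² = (2bd/(1+b²+d²))². In particular the transmission probability is independent of t. -/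
/-!
By the second design condition the denominator collapses to `(1 + b² + d²)(1 + it)`, and by
the first (`ac = -bd`) the numerator to `-2bd(1 - it)`. Since `1 - it` is the conjugate of
`1 + it`, their quotient lies on the unit circle, so `|S(t)| = |2bd| / (1 + b² + d²)`.
-/

open Complex ComplexConjugate

lemma Complex.norm_conj_div_self {z : ℂ} (hz : z ≠ 0) : ‖conj z / z‖ = 1 := by
  rw [norm_div, norm_conj, div_self (norm_ne_zero_iff.mpr hz)]

lemma Complex.one_add_I_mul_ofReal_ne_zero (t : ℝ) : (1 + I * t : ℂ) ≠ 0 := by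
  intro h
  simpa using congrArg re h

section FlatPassband

variable {a b c d : ℝ} (t : ℝ)

theorem flatPassband_denominator_eq
    (h2 : 1 + b ^ 2 + d ^ 2 = a ^ 2 + c ^ 2 + (a * d - b * c) ^ 2) :
    (1 : ℂ) + ((a ^ 2 + c ^ 2 : ℝ) : ℂ) * (I * t) + ((b ^ 2 + d ^ 2 : ℝ) : ℂ) +
        (((a * d - b * c) ^ 2 : ℝ) : ℂ) * (I * t) =
      ((1 + b ^ 2 + d ^ 2 : ℝ) : ℂ) * (1 + I * t) := by
  have h2' := congrArg ((↑) : ℝ → ℂ) h2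
  push_cast at h2' ⊢
  linear_combination (-(I * t)) * h2'

theorem flatPassband_numerator_eq (h1 : a * c + b * d = 0) :
    -(2 * (((a * c : ℝ) : ℂ) * (I * t) + ((b * d : ℝ) : ℂ))) =
      ((-2 * b * d : ℝ) : ℂ) * conj (1 + I * t) := by
  have h1' := congrArg ((↑) : ℝ → ℂ) h1
  push_cast at h1' ⊢
  simp only [map_add, map_one, map_mul, conj_I, conj_ofReal]
  linear_combination (-2 * I * t) * h1'

end FlatPassband

/-- Under the flat-passband design conditions `ac + bd = 0` and
`1 + b² + d² = a² + c² + (ad−bc)²`, for every `t > 0` the amplitude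
`S(t) = −2(ac·(it)+bd)/(1+(a²+c²)·(it)+(b²+d²)+(ad−bc)²·(it))` is well defined and
`|S(t)|² = (2bd/(1+b²+d²))²`, independently of `t`. -/
theorem flat_passband_transmission
    (a b c d : ℝ)
    (h1 : a * c + b * d = 0)
    (h2 : 1 + b ^ 2 + d ^ 2 = a ^ 2 + c ^ 2 + (a * d - b * c) ^ 2) :
    ∀ t : ℝ, 0 < t →
      ((1 : ℂ) + ((a ^ 2 + c ^ 2 : ℝ) : ℂ) * (Complex.I * t) + ((b ^ 2 + d ^ 2 : ℝ) : ℂ) +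
          (((a * d - b * c) ^ 2 : ℝ) : ℂ) * (Complex.I * t)) ≠ 0 ∧
      ‖(-(2 * (((a * c : ℝ) : ℂ) * (Complex.I * t) + ((b * d : ℝ) : ℂ))) /
          ((1 : ℂ) + ((a ^ 2 + c ^ 2 : ℝ) : ℂ) * (Complex.I * t) +
            ((b ^ 2 + d ^ 2 : ℝ) : ℂ) +
            (((a * d - b * c) ^ 2 : ℝ) : ℂ) * (Complex.I * t)))‖ ^ 2 =
        (2 * b * d / (1 + b ^ 2 + d ^ 2)) ^ 2 := by
  intro t _
  rw [flatPassband_denominator_eq t h2, flatPassband_numerator_eq t h1]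
  have hB : ((1 + b ^ 2 + d ^ 2 : ℝ) : ℂ) ≠ 0 := ofReal_ne_zero.mpr (by positivity)
  have hw := one_add_I_mul_ofReal_ne_zero t
  refine ⟨mul_ne_zero hB hw, ?_⟩
  rw [mul_div_mul_comm, norm_mul, norm_conj_div_self hw, mul_one, ← ofReal_div, norm_real,
    Real.norm_eq_abs, sq_abs]
  ring
end

section
/- Let b, d be real numbers. There exists a real number a such that (1+d²)·a⁴ + (2b²d² − 1 − b² − d²)·a² + b²d²(1+b²) = 0 if and only if 1 + b² + d² − 8b²d² ≥ 0. -/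
/-!
In `x = a²` the equation is a quadratic with positive leading coefficient whose discriminant
factors as `(1 + b² + d²)(1 + b² + d² − 8b²d²)`, so a real root forces the constraint. Conversely,
under the constraint the middle coefficient `2b²d² − (1 + b² + d²) ≤ −6b²d²` is nonpositive, so the
larger root `x` of the quadratic is nonnegative and `a = √x` is a solution.
-/

theorem discrim_nonneg_of_biquadratic_eq_zero {R : Type*} [CommRing R] [LinearOrder R]
    [IsStrictOrderedRing R] {a b c t : R} (h : a * t ^ 4 + b * t ^ 2 + c = 0) :
    0 ≤ discrim a b c := by
  rw [discrim_eq_sq_of_quadratic_eq_zero (x := t ^ 2) (by linear_combination h)]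
  exact sq_nonneg _

theorem exists_nonneg_quadratic_eq_zero {a b c : ℝ} (ha : 0 < a) (hb : b ≤ 0)
    (hΔ : 0 ≤ discrim a b c) : ∃ x, 0 ≤ x ∧ a * (x * x) + b * x + c = 0 := by
  have hs : discrim a b c = √(discrim a b c) * √(discrim a b c) := (Real.mul_self_sqrt hΔ).symm
  have hnum : 0 ≤ -b + √(discrim a b c) := by linarith [Real.sqrt_nonneg (discrim a b c)]
  refine ⟨(-b + √(discrim a b c)) / (2 * a), div_nonneg hnum (by positivity), ?_⟩
  exact (quadratic_eq_zero_iff ha.ne' hs _).2 (Or.inl rfl)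

theorem exists_biquadratic_eq_zero_of_discrim_nonneg {a b c : ℝ} (ha : 0 < a) (hb : b ≤ 0)
    (hΔ : 0 ≤ discrim a b c) : ∃ t, a * t ^ 4 + b * t ^ 2 + c = 0 := by
  obtain ⟨x, hx, hroot⟩ := exists_nonneg_quadratic_eq_zero ha hb hΔ
  refine ⟨√x, ?_⟩
  rw [show (4 : ℕ) = 2 * 2 from rfl, pow_mul, Real.sq_sqrt hx]
  linear_combination hroot

/-- The biquadratic equation
`(1+d²)a⁴ + (2b²d² − 1 − b² − d²)a² + b²d²(1+b²) = 0` has a real solution `a` if and only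
if `1 + b² + d² − 8b²d² ≥ 0`. -/
theorem biquadratic_real_solvability (b d : ℝ) :
    (∃ a : ℝ, (1 + d ^ 2) * a ^ 4 + (2 * b ^ 2 * d ^ 2 - 1 - b ^ 2 - d ^ 2) * a ^ 2 +
        b ^ 2 * d ^ 2 * (1 + b ^ 2) = 0) ↔
    1 + b ^ 2 + d ^ 2 - 8 * b ^ 2 * d ^ 2 ≥ 0 := by
  have hS : 0 < 1 + b ^ 2 + d ^ 2 := by positivity
  have hdiscrim : discrim (1 + d ^ 2) (2 * b ^ 2 * d ^ 2 - 1 - b ^ 2 - d ^ 2)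
      (b ^ 2 * d ^ 2 * (1 + b ^ 2)) =
      (1 + b ^ 2 + d ^ 2) * (1 + b ^ 2 + d ^ 2 - 8 * b ^ 2 * d ^ 2) := by
    unfold discrim
    ring
  constructor
  · rintro ⟨a, ha⟩
    have hΔ := discrim_nonneg_of_biquadratic_eq_zero ha
    rw [hdiscrim] at hΔ
    exact nonneg_of_mul_nonneg_right hΔ hS
  · intro h
    refine exists_biquadratic_eq_zero_of_discrim_nonneg (by positivity)
      (by nlinarith [sq_nonneg (b * d)]) ?_
    rw [hdiscrim]
    exact mul_nonneg hS.le h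
end

section
/- For all real numbers b, d satisfying 1 + b² + d² − 8b²d² ≥ 0, one has (2bd/(1+b²+d²))² ≤ 1/4, and equality holds if and only if b² = 1/2 and d² = 1/2. -/
/-- For all real `b, d` with `1 + b² + d² − 8b²d² ≥ 0`, one has
`(2bd/(1+b²+d²))² ≤ 1/4`, with equality if and only if `b² = 1/2` and `d² = 1/2`. -/
theorem flat_passband_optimization (b d : ℝ)
    (h : 1 + b ^ 2 + d ^ 2 - 8 * b ^ 2 * d ^ 2 ≥ 0) :
    (2 * b * d / (1 + b ^ 2 + d ^ 2)) ^ 2 ≤ 1 / 4 ∧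
    ((2 * b * d / (1 + b ^ 2 + d ^ 2)) ^ 2 = 1 / 4 ↔
      b ^ 2 = 1 / 2 ∧ d ^ 2 = 1 / 2) := by
  have hS : (0:ℝ) < 1 + b ^ 2 + d ^ 2 := by positivity
  have key : 16 * b ^ 2 * d ^ 2 ≤ (1 + b ^ 2 + d ^ 2) ^ 2 := by
    rcases le_total (b ^ 2 + d ^ 2) 1 with hc | hc
    · nlinarith [sq_nonneg (b ^ 2 - d ^ 2), sq_nonneg (b ^ 2 + d ^ 2)]
    · nlinarith [sq_nonneg (b ^ 2 - d ^ 2)]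
  have hdiv : (2 * b * d / (1 + b ^ 2 + d ^ 2)) ^ 2
      = 4 * b ^ 2 * d ^ 2 / (1 + b ^ 2 + d ^ 2) ^ 2 := by
    rw [div_pow]; ring_nf
  constructor
  · rw [hdiv, div_le_iff₀ (by positivity)]
    nlinarith
  · constructor
    · intro heq
      rw [hdiv, div_eq_iff (by positivity)] at heq
      have h16 : 16 * b ^ 2 * d ^ 2 = (1 + b ^ 2 + d ^ 2) ^ 2 := by nlinarith
      have hsum : b ^ 2 + d ^ 2 = 1 := by
        nlinarith [sq_nonneg (b ^ 2 - d ^ 2), sq_nonneg (b ^ 2 + d ^ 2 - 1),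
          sq_nonneg (b ^ 2 + d ^ 2)]
      constructor <;> nlinarith [sq_nonneg (b ^ 2 - d ^ 2)]
    · rintro ⟨hb, hd⟩
      rw [hdiv, hb, hd]
      norm_num
end
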